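/- The alphabet model on a one-dimensional interval (lattice {1,…,N} with exchanges only at bonds {x,x+1}, 1 ≤ x ≤ N-1) satisfies the Kolmogorov cycle criterion for every choice of positive rates c(i,j), hence is always reversible. Equivalently: for every cyclic sequence of adjacent transpositions of N labeled particles on the interval returning to the initial configuration, and every pair of particles i,j, the number of transpositions swapping i leftward past j equals the number swapping i rightward past j (N_{i,j} = N_{j,i}). -/

import Mathlib

/-!
Track the ℤ-valued indicator that particle `i` stands to the left of particle `j`. An adjacent
transposition changes the relative order of `i` and `j` only when it exchanges exactly these two
particles, so at each step the indicator increases by one when `j` jumps rightward over `i`,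
decreases by one when `i` jumps rightward over `j`, and is unchanged otherwise. Summed over a
cycle the increments telescope to zero, hence `N_{i,j} = N_{j,i}`.
-/

open Equiv

theorem ite_swap_lt_sub_ite_lt_of_covBy {α : Type*} [LinearOrder α] {a b p q : α}
    (hab : a ⋖ b) (hpq : p ≠ q) :
    ((if swap a b p < swap a b q then 1 else 0 : ℤ) - if p < q then 1 else 0) =
      (if p = b ∧ q = a then 1 else 0) - if p = a ∧ q = b then 1 else 0 := by
  have hlt := hab.lt
  have hleft : ∀ {z}, z < b ↔ z ≤ a := hab.lt_iff_le_left
  have hright : ∀ {z}, a < z ↔ b ≤ z := hab.lt_iff_le_right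
  simp only [swap_apply_def]
  split_ifs <;> grind

theorem Fin.covBy_mk_add_one {N a : ℕ} (h : a + 1 < N) :
    (⟨a, Nat.lt_of_succ_lt h⟩ : Fin N) ⋖ ⟨a + 1, h⟩ :=
  ⟨Fin.mk_lt_mk.2 a.lt_succ_self, fun _ h₁ h₂ => by
    simp only [Fin.lt_def] at h₁ h₂
    omega⟩

theorem Fin.sum_succ_sub_castSucc {M : Type*} [AddCommGroup M] {n : ℕ} (f : Fin (n + 1) → M) :
    ∑ i : Fin n, (f i.succ - f i.castSucc) = f (Fin.last n) - f 0 := by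
  have hcast := Fin.sum_univ_castSucc f
  rw [Fin.sum_univ_succ f] at hcast
  rw [Finset.sum_sub_distrib, eq_sub_of_add_eq' hcast.symm]
  abel

def leftOf {α β : Type*} [LT α] [DecidableLT α] (σ : α ≃ β) (i j : β) : ℤ :=
  if σ.symm i < σ.symm j then 1 else 0

theorem leftOf_swap_trans_sub {α β : Type*} [LinearOrder α] [DecidableEq β] {a b : α}
    (hab : a ⋖ b) (σ : α ≃ β) {i j : β} (hij : i ≠ j) :
    leftOf ((swap a b).trans σ) i j - leftOf σ i j =
      (if σ a = j ∧ σ b = i then 1 else 0) - if σ a = i ∧ σ b = j then 1 else 0 := by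
  have hne : σ.symm i ≠ σ.symm j := σ.symm.injective.ne hij
  rw [leftOf, leftOf, symm_trans_apply, symm_trans_apply, symm_swap,
    ite_swap_lt_sub_ite_lt_of_covBy hab hne]
  simp only [Equiv.symm_apply_eq, eq_comm (a := i), eq_comm (a := j), and_comm (a := σ b = i)]

/-- the alphabet model on an interval satisfies the Kolmogorov
criterion for any rates: along any cyclic sequence of adjacent transpositions
on sites `{0,…,N-1}` and for any two particles `i ≠ j`, the number of
exchanges where `i` moves rightward past `j` equals the number where `j`
moves rightward past `i`. -/
theorem stmt_15 (N L : ℕ)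
    (η : Fin (L + 1) → (Fin N ≃ Fin N)) (x : Fin L → ℕ)
    (hx : ∀ l : Fin L, x l + 1 < N)
    (hstep : ∀ l : Fin L,
      η l.succ = (Equiv.swap (⟨x l, Nat.lt_of_succ_lt (hx l)⟩ : Fin N)
        (⟨x l + 1, hx l⟩ : Fin N)).trans (η l.castSucc))
    (hcyc : η (Fin.last L) = η 0)
    (i j : Fin N) (hij : i ≠ j) :
    (Finset.univ.filter (fun l : Fin L =>
        η l.castSucc ⟨x l, Nat.lt_of_succ_lt (hx l)⟩ = i ∧
        η l.castSucc ⟨x l + 1, hx l⟩ = j)).card =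
    (Finset.univ.filter (fun l : Fin L =>
        η l.castSucc ⟨x l, Nat.lt_of_succ_lt (hx l)⟩ = j ∧
        η l.castSucc ⟨x l + 1, hx l⟩ = i)).card := by
  have htele := Fin.sum_succ_sub_castSucc fun k => leftOf (η k) i j
  rw [hcyc, sub_self] at htele
  simp only [hstep, leftOf_swap_trans_sub (Fin.covBy_mk_add_one (hx _)) _ hij,
    Finset.sum_sub_distrib, Finset.sum_boole] at htele
  exact_mod_cast (sub_eq_zero.mp htele).symm
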